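/- arXiv:0812.1683 — 2 statements merged into one kernel-verified Lean document; each statement's English description precedes it below -/
import Mathlib

section
/- For the mean-field 1-trigonometric model, the quantity σ_N(v) = (1/N) ln |Σ_{j=0}^{N} (−1)^j μ_j(v)|, where μ_j(v) = C(N,j) if 2Δj/N ≤ v and 0 otherwise, satisfies: for fixed v with 0 < v < 2Δ and v/(2Δ) irrational, lim_{N→∞} σ_N(v) exists and equals −(x ln x + (1−x) ln(1−x)) where x = v/(2Δ) — in particular σ(v) is a real-analytic function of v on (0, 2Δ), consistent with the absence of a phase transition for k = 1. -/
/-!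
With `x = v / (2Δ)`, the condition `2Δj/N ≤ v` says `j ≤ ⌊xN⌋`, so the alternating partial sum
`∑_{j ≤ m} (-1)^j C(N, j)` telescopes (Pascal's rule) to `±C(N-1, m)` with `m = ⌊xN⌋`.
A binomial coefficient is bracketed by the entropy: the terms `C(n, j) m^j (n-m)^(n-j)` of
`(m + (n - m))^n = n^n` are largest at `j = m`, so `n^n / (n + 1) ≤ C(n, m) m^m (n-m)^(n-m) ≤ n^n`,
i.e. `n H(m/n) - log (n + 1) ≤ log C(n, m) ≤ n H(m/n)`. Since `m/n → x` and `H` is continuous,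
`σ_N(v) → H(x)`; analyticity of `H` on `(0, 1)` comes from that of `log` on `(0, ∞)`.
-/

open Real Filter Finset Topology

namespace Nat

theorem choose_mul_sub_le_choose_succ_mul {n m j : ℕ} (hjm : j < m) :
    n.choose j * (n - m) ≤ n.choose (j + 1) * m := by
  refine Nat.le_of_mul_le_mul_right (c := j + 1) ?_ j.succ_pos
  calc n.choose j * (n - m) * (j + 1) = n.choose j * ((n - m) * (j + 1)) := by ring
    _ ≤ n.choose j * ((n - j) * m) := Nat.mul_le_mul_left _ (Nat.mul_le_mul (by omega) hjm)
    _ = n.choose (j + 1) * m * (j + 1) := by rw [← mul_assoc, ← choose_succ_right_eq]; ring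

theorem choose_succ_mul_le_choose_mul_sub {n m j : ℕ} (hmj : m ≤ j) :
    n.choose (j + 1) * m ≤ n.choose j * (n - m) := by
  refine Nat.le_of_mul_le_mul_right (c := j + 1) ?_ j.succ_pos
  calc n.choose (j + 1) * m * (j + 1) = n.choose j * ((n - j) * m) := by
        rw [mul_right_comm, choose_succ_right_eq]; ring
    _ ≤ n.choose j * ((n - m) * (j + 1)) :=
        Nat.mul_le_mul_left _ (Nat.mul_le_mul (by omega) (by omega))
    _ = n.choose j * (n - m) * (j + 1) := by ring

theorem choose_mul_pow_mul_pow_le {n m : ℕ} (hm : m ≤ n) (j : ℕ) :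
    n.choose j * m ^ j * (n - m) ^ (n - j) ≤ n.choose m * m ^ m * (n - m) ^ (n - m) := by
  set t : ℕ → ℕ := fun j ↦ n.choose j * m ^ j * (n - m) ^ (n - j)
  have split : ∀ j < n, t j = n.choose j * (n - m) * (m ^ j * (n - m) ^ (n - (j + 1))) ∧
      t (j + 1) = n.choose (j + 1) * m * (m ^ j * (n - m) ^ (n - (j + 1))) := by
    intro j hj
    refine ⟨?_, ?_⟩
    · simp only [t, show n - j = n - (j + 1) + 1 by omega, pow_succ]; ring
    · simp only [t, pow_succ]; ring
  have up : ∀ j < m, t j ≤ t (j + 1) := by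
    intro j hj
    obtain ⟨h₀, h₁⟩ := split j (by omega)
    rw [h₀, h₁]
    exact Nat.mul_le_mul_right _ (choose_mul_sub_le_choose_succ_mul hj)
  have down : ∀ j ≥ m, t (j + 1) ≤ t j := by
    intro j hj
    rcases lt_or_ge j n with hjn | hnj
    · obtain ⟨h₀, h₁⟩ := split j hjn
      rw [h₀, h₁]
      exact Nat.mul_le_mul_right _ (choose_succ_mul_le_choose_mul_sub hj)
    · simp [t, choose_eq_zero_of_lt (show n < j + 1 by omega)]
  show t j ≤ t m
  rcases le_total j m with hjm | hmj
  · induction hjm using Nat.decreasingInduction with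
    | self => rfl
    | of_succ k hk ih => exact (up k hk).trans ih
  · exact antitoneOn_nat_Ici_of_succ_le down (le_refl m : m ∈ {x | m ≤ x}) hmj hmj

theorem choose_mul_pow_mul_pow_pos {n m : ℕ} (hm : m ≤ n) :
    0 < n.choose m * m ^ m * (n - m) ^ (n - m) :=
  Nat.mul_pos (Nat.mul_pos (choose_pos hm) Nat.pow_self_pos) Nat.pow_self_pos

theorem sum_range_choose_mul_pow_mul_pow {n m : ℕ} (hm : m ≤ n) :
    ∑ j ∈ range (n + 1), n.choose j * m ^ j * (n - m) ^ (n - j) = n ^ n := by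
  calc ∑ j ∈ range (n + 1), n.choose j * m ^ j * (n - m) ^ (n - j)
      = (m + (n - m)) ^ n := by
        rw [add_pow]; exact sum_congr rfl fun j _ ↦ by rw [Nat.cast_id]; ring
    _ = n ^ n := by rw [Nat.add_sub_cancel' hm]

theorem choose_mul_pow_mul_pow_le_pow {n m : ℕ} (hm : m ≤ n) :
    n.choose m * m ^ m * (n - m) ^ (n - m) ≤ n ^ n := by
  rw [← sum_range_choose_mul_pow_mul_pow hm]
  exact single_le_sum (f := fun j ↦ n.choose j * m ^ j * (n - m) ^ (n - j))
    (fun _ _ ↦ Nat.zero_le _) (mem_range.mpr (by omega))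

theorem pow_le_succ_mul_choose_mul_pow_mul_pow {n m : ℕ} (hm : m ≤ n) :
    n ^ n ≤ (n + 1) * (n.choose m * m ^ m * (n - m) ^ (n - m)) := by
  calc n ^ n = ∑ j ∈ range (n + 1), n.choose j * m ^ j * (n - m) ^ (n - j) :=
        (sum_range_choose_mul_pow_mul_pow hm).symm
    _ ≤ #(range (n + 1)) • (n.choose m * m ^ m * (n - m) ^ (n - m)) :=
        sum_le_card_nsmul _ _ _ fun j _ ↦ choose_mul_pow_mul_pow_le hm j
    _ = _ := by rw [card_range, smul_eq_mul]

end Nat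

namespace Real

theorem binEntropy_eq_neg (p : ℝ) : binEntropy p = -(p * log p + (1 - p) * log (1 - p)) := by
  simp only [binEntropy, log_inv]; ring

theorem analyticOnNhd_binEntropy : AnalyticOnNhd ℝ binEntropy (Set.Ioo 0 1) := by
  rintro p ⟨hp0, hp1⟩
  have hp1' : 0 < 1 - p := sub_pos.mpr hp1
  simp only [funext binEntropy_eq_neg]
  fun_prop (disch := assumption)



theorem mul_log_div_eq (a : ℝ) {c : ℝ} (hc : c ≠ 0) : a * log (c / a) = a * (log c - log a) := by
  rcases eq_or_ne a 0 with rfl | ha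
  · simp
  · rw [log_div hc ha]

theorem add_mul_binEntropy_div_add {a b : ℝ} (ha : 0 ≤ a) (hb : 0 ≤ b) :
    (a + b) * binEntropy (a / (a + b)) = (a + b) * log (a + b) - (a * log a + b * log b) := by
  rcases (add_nonneg ha hb).eq_or_lt' with hab | hab
  · obtain ⟨rfl, rfl⟩ : a = 0 ∧ b = 0 := ⟨by linarith, by linarith⟩
    simp
  have h₁ : 1 - a / (a + b) = b / (a + b) := by field_simp; ring
  have h₂ : ∀ c, (a + b) * (c / (a + b)) = c := fun c ↦ by field_simp
  rw [binEntropy, h₁, inv_div, inv_div, mul_add, ← mul_assoc, ← mul_assoc, h₂, h₂,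
    mul_log_div_eq _ hab.ne', mul_log_div_eq _ hab.ne']
  ring

theorem natCast_mul_binEntropy_div {n m : ℕ} (hm : m ≤ n) :
    (n : ℝ) * binEntropy (m / n) =
      n * log n - (m * log m + ((n - m : ℕ) : ℝ) * log ((n - m : ℕ) : ℝ)) := by
  have h : (m : ℝ) + ((n - m : ℕ) : ℝ) = n := by rw [Nat.cast_sub hm]; ring
  simpa only [h] using add_mul_binEntropy_div_add m.cast_nonneg (n - m).cast_nonneg

theorem log_choose_mul_pow_mul_pow {n m : ℕ} (hm : m ≤ n) :
    log ((n.choose m * m ^ m * (n - m) ^ (n - m) : ℕ) : ℝ) =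
      log (n.choose m) + (m * log m + ((n - m : ℕ) : ℝ) * log ((n - m : ℕ) : ℝ)) := by
  have hc : (n.choose m : ℝ) ≠ 0 := by exact_mod_cast (Nat.choose_pos hm).ne'
  have hm' : ((m ^ m : ℕ) : ℝ) ≠ 0 := by exact_mod_cast Nat.pow_self_pos.ne'
  have hnm : (((n - m) ^ (n - m) : ℕ) : ℝ) ≠ 0 := by exact_mod_cast Nat.pow_self_pos.ne'
  rw [Nat.cast_mul, Nat.cast_mul, log_mul (mul_ne_zero hc hm') hnm, log_mul hc hm',
    Nat.cast_pow, Nat.cast_pow, log_pow, log_pow]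
  ring

theorem log_choose_le_mul_binEntropy {n m : ℕ} (hm : m ≤ n) :
    log (n.choose m) ≤ n * binEntropy (m / n) := by
  have ht : (0 : ℝ) < ((n.choose m * m ^ m * (n - m) ^ (n - m) : ℕ) : ℝ) :=
    Nat.cast_pos.mpr (Nat.choose_mul_pow_mul_pow_pos hm)
  have h := log_le_log ht
    (Nat.cast_le (α := ℝ).mpr (Nat.choose_mul_pow_mul_pow_le_pow hm))
  rw [log_choose_mul_pow_mul_pow hm, Nat.cast_pow, log_pow] at h
  rw [natCast_mul_binEntropy_div hm]
  linarith

theorem mul_binEntropy_sub_log_le_log_choose {n m : ℕ} (hm : m ≤ n) :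
    n * binEntropy (m / n) - log (n + 1) ≤ log (n.choose m) := by
  have ht : (0 : ℝ) < ((n.choose m * m ^ m * (n - m) ^ (n - m) : ℕ) : ℝ) :=
    Nat.cast_pos.mpr (Nat.choose_mul_pow_mul_pow_pos hm)
  have h := log_le_log (by exact_mod_cast Nat.pow_self_pos)
    (Nat.cast_le (α := ℝ).mpr (Nat.pow_le_succ_mul_choose_mul_pow_mul_pow hm))
  rw [Nat.cast_mul, log_mul (by positivity) ht.ne', log_choose_mul_pow_mul_pow hm, Nat.cast_pow,
    log_pow, Nat.cast_succ] at h
  rw [natCast_mul_binEntropy_div hm]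
  linarith

end Real

theorem tendsto_log_choose_div {m : ℕ → ℕ} {x : ℝ} (hm : ∀ᶠ n in atTop, m n ≤ n)
    (hx : Tendsto (fun n : ℕ ↦ (m n : ℝ) / n) atTop (𝓝 x)) :
    Tendsto (fun n : ℕ ↦ log (n.choose (m n)) / n) atTop (𝓝 (binEntropy x)) := by
  have hH : Tendsto (fun n : ℕ ↦ binEntropy (m n / n)) atTop (𝓝 (binEntropy x)) :=
    (binEntropy_continuous.tendsto x).comp hx
  have hlog : Tendsto (fun n : ℕ ↦ log (n + 1) / n) atTop (𝓝 0) := by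
    have h := (tendsto_pow_log_div_mul_add_atTop 1 (-1) 1 one_ne_zero).comp
      (tendsto_atTop_add_const_right _ 1 tendsto_natCast_atTop_atTop)
    simpa [Function.comp_def] using h
  refine tendsto_of_tendsto_of_tendsto_of_le_of_le' (by simpa using hH.sub hlog) hH ?_ ?_
  · filter_upwards [hm, eventually_gt_atTop 0] with n hmn hn
    rw [le_div_iff₀ (by positivity), sub_mul, div_mul_cancel₀ _ (by positivity), mul_comm]
    exact mul_binEntropy_sub_log_le_log_choose hmn
  · filter_upwards [hm, eventually_gt_atTop 0] with n hmn hn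
    rw [div_le_iff₀ (by positivity), mul_comm]
    exact log_choose_le_mul_binEntropy hmn

theorem Nat.floor_mul_add_one_le {x : ℝ} (hx₀ : 0 ≤ x) (hx₁ : x < 1) (n : ℕ) :
    ⌊x * (n + 1)⌋₊ ≤ n :=
  Nat.lt_succ_iff.mp <| (Nat.floor_lt (by positivity)).mpr <| by push_cast; nlinarith

theorem tendsto_natCast_floor_mul_add_one_div {x : ℝ} (hx : 0 ≤ x) :
    Tendsto (fun n : ℕ ↦ (⌊x * (n + 1)⌋₊ : ℝ) / n) atTop (𝓝 x) := by
  have h₁ := (tendsto_nat_floor_mul_div_atTop hx).comp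
    (tendsto_atTop_add_const_right _ 1 tendsto_natCast_atTop_atTop)
  have h₂ := (tendsto_natCast_div_add_atTop (1 : ℝ)).inv₀ one_ne_zero
  have h := h₁.mul h₂
  rw [inv_one, mul_one] at h
  refine h.congr' ?_
  filter_upwards [eventually_ne_atTop 0] with n hn
  simp only [Function.comp_apply]
  field_simp

theorem tendsto_log_choose_floor_mul_add_one_div {x : ℝ} (hx₀ : 0 ≤ x) (hx₁ : x < 1) :
    Tendsto (fun n : ℕ ↦ log (n.choose ⌊x * (n + 1)⌋₊) / (n + 1)) atTop (𝓝 (binEntropy x)) := by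
  have h := (tendsto_natCast_div_add_atTop (1 : ℝ)).mul
    (tendsto_log_choose_div (.of_forall (Nat.floor_mul_add_one_le hx₀ hx₁))
      (tendsto_natCast_floor_mul_add_one_div hx₀))
  rw [one_mul] at h
  refine h.congr' ?_
  filter_upwards [eventually_ne_atTop 0] with n hn
  field_simp

theorem Int.sum_range_neg_one_pow_mul_ite_choose {n m : ℕ} (hm : m ≤ n + 1) :
    ∑ j ∈ Finset.range (n + 1 + 1), (-1 : ℤ) ^ j * (if j ≤ m then ((n + 1).choose j : ℤ) else 0) =
      (-1) ^ m * n.choose m := by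
  have hfilter : (Finset.range (n + 1 + 1)).filter (· ≤ m) = Finset.range (m + 1) := by
    ext j; simp only [mem_filter, mem_range]; omega
  simp_rw [mul_ite, mul_zero]
  rw [← sum_filter, hfilter, Int.alternating_sum_range_choose_eq_choose]

theorem abs_sum_neg_one_pow_mul_ite_div_le_choose {c v : ℝ} (hc : 0 < c) (hv : 0 ≤ v)
    (hvc : v < c) (n : ℕ) :
    |((∑ j ∈ Finset.range (n + 1 + 1), (-1 : ℤ) ^ j *
      (if c * j / ((n + 1 : ℕ) : ℝ) ≤ v then ((n + 1).choose j : ℤ) else 0) : ℤ) : ℝ)| =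
      n.choose ⌊v / c * (n + 1)⌋₊ := by
  have hcond : ∀ j : ℕ, c * j / ((n + 1 : ℕ) : ℝ) ≤ v ↔ j ≤ ⌊v / c * (n + 1)⌋₊ := by
    intro j
    rw [Nat.le_floor_iff (by positivity), div_le_iff₀ (by positivity), div_mul_eq_mul_div,
      le_div_iff₀ hc]
    push_cast; constructor <;> intro h <;> linarith
  have hle : ⌊v / c * (n + 1)⌋₊ ≤ n + 1 :=
    (Nat.floor_mul_add_one_le (by positivity) ((div_lt_one hc).mpr hvc) n).trans n.le_succ
  simp only [hcond, Int.sum_range_neg_one_pow_mul_ite_choose hle]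
  push_cast
  rw [abs_mul, abs_pow, abs_neg, abs_one, one_pow, one_mul, abs_of_nonneg (by positivity)]

theorem k_trig_model_k1_sigma_limit_general
    (Δ : ℝ)
    (μ : ℕ → ℕ → ℝ → ℤ)
    (hμ : ∀ N j (v : ℝ), μ N j v = if 2 * Δ * j / N ≤ v then (N.choose j : ℤ) else 0)
    (σ : ℕ → ℝ → ℝ)
    (hσ : ∀ N (v : ℝ), σ N v =
      (1 / N) * Real.log |(∑ j ∈ Finset.range (N + 1), (-1 : ℤ) ^ j * μ N j v : ℤ)|) :
    (∀ v : ℝ, 0 < v → v < 2 * Δ → Irrational (v / (2 * Δ)) →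
      Tendsto (fun N => σ N v) atTop
        (nhds (-(v / (2 * Δ) * Real.log (v / (2 * Δ)) +
          (1 - v / (2 * Δ)) * Real.log (1 - v / (2 * Δ)))))) ∧
    AnalyticOnNhd ℝ
      (fun v : ℝ => -(v / (2 * Δ) * Real.log (v / (2 * Δ)) +
        (1 - v / (2 * Δ)) * Real.log (1 - v / (2 * Δ))))
      (Set.Ioo 0 (2 * Δ)) := by
  simp only [← binEntropy_eq_neg]
  refine ⟨fun v hv₀ hv _ ↦ ?_, fun v ⟨hv₀, hv⟩ ↦ ?_⟩
  · have hΔ : 0 < 2 * Δ := hv₀.trans hv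
    have hσ_succ : ∀ n : ℕ,
        σ (n + 1) v = log (n.choose ⌊v / (2 * Δ) * (n + 1)⌋₊) / (n + 1) := by
      intro n
      rw [hσ, sum_congr rfl fun j _ ↦ by rw [hμ],
        abs_sum_neg_one_pow_mul_ite_div_le_choose hΔ hv₀.le hv]
      push_cast
      ring
    rw [← tendsto_add_atTop_iff_nat 1]
    simp only [hσ_succ]
    exact tendsto_log_choose_floor_mul_add_one_div (by positivity) ((div_lt_one hΔ).mpr hv)
  · have hΔ : 0 < 2 * Δ := hv₀.trans hv
    exact (analyticOnNhd_binEntropy _ ⟨div_pos hv₀ hΔ, (div_lt_one hΔ).mpr hv⟩).comp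
      (f := fun v ↦ v / (2 * Δ)) (by fun_prop)

/-- For the mean-field 1-trigonometric model, σ_N(v) = (1/N)ln|Σ_j(−1)^j μ_j(v)| with
μ_j(v) = C(N,j) for 2Δj/N ≤ v. For 0 < v < 2Δ with v/(2Δ) irrational, σ_N(v) converges as
N → ∞ to the binary entropy −(x ln x + (1−x)ln(1−x)), x = v/(2Δ); in particular the limit
σ is real-analytic on (0,2Δ), consistent with the absence of a phase transition for k=1. -/
theorem k_trig_model_k1_sigma_limit
    (Δ : ℝ) (hΔ : 0 < Δ)
    (μ : ℕ → ℕ → ℝ → ℤ)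
    (hμ : ∀ N j (v : ℝ), μ N j v = if 2 * Δ * j / N ≤ v then (N.choose j : ℤ) else 0)
    (σ : ℕ → ℝ → ℝ)
    (hσ : ∀ N (v : ℝ), σ N v =
      (1 / N) * Real.log |(∑ j ∈ Finset.range (N + 1), (-1 : ℤ) ^ j * μ N j v : ℤ)|) :
    (∀ v : ℝ, 0 < v → v < 2 * Δ → Irrational (v / (2 * Δ)) →
      Tendsto (fun N => σ N v) atTop
        (nhds (-(v / (2 * Δ) * Real.log (v / (2 * Δ)) +
          (1 - v / (2 * Δ)) * Real.log (1 - v / (2 * Δ)))))) ∧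
    AnalyticOnNhd ℝ
      (fun v : ℝ => -(v / (2 * Δ) * Real.log (v / (2 * Δ)) +
        (1 - v / (2 * Δ)) * Real.log (1 - v / (2 * Δ))))
      (Set.Ioo 0 (2 * Δ)) :=
  k_trig_model_k1_sigma_limit_general Δ μ hμ σ hσ
end

section
/- Let f : ℝ → ℝ be given by f(v) = P(v) + c · v^n Θ(v) with P a polynomial, c ≠ 0, and n ≥ 1. Then f is exactly (n−1)-times continuously differentiable at 0 and not n-times differentiable at 0; moreover, if additionally f > 0 on a neighborhood of 0, then ln f is exactly (n−1)-times continuously differentiable at 0 and not n-times differentiable at 0. -/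
/-!
For `n ≥ 1` the truncated power `v ↦ max v 0 ^ n` is `C^(n-1)`: differentiating it lowers the
exponent by one, down to the continuous function `max v 0`, which is not differentiable at `0`.
The same induction shows that it is not `C^n` at `0`, and adding a smooth `P` changes neither
fact. Since `f = exp (log f)` where `f > 0`, the function `log f` has exactly the same
regularity as `f`.
-/

open Set Filter Topology

lemma ite_nonneg_pow_eq_max_zero_pow {n : ℕ} (hn : n ≠ 0) (v : ℝ) :
    (if 0 ≤ v then v ^ n else 0) = max v 0 ^ n := by
  split_ifs with hv
  · rw [max_eq_left hv]
  · rw [max_eq_right (not_le.mp hv).le, zero_pow hn]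

lemma hasDerivAt_max_zero_pow {m : ℕ} (hm : m ≠ 0) (v : ℝ) :
    HasDerivAt (fun v : ℝ => max v 0 ^ (m + 1)) ((m + 1) * max v 0 ^ m) v := by
  rcases lt_trichotomy v 0 with hv | rfl | hv
  · have hzero : (fun v : ℝ => max v 0 ^ (m + 1)) =ᶠ[𝓝 v] fun _ => 0 := by
      filter_upwards [Iio_mem_nhds hv] with y hy
      simp [max_eq_right (mem_Iio.mp hy).le]
    simpa [max_eq_right hv.le, zero_pow hm] using
      (hasDerivAt_const v (0 : ℝ)).congr_of_eventuallyEq hzero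
  · have hleft : HasDerivWithinAt (fun v : ℝ => max v 0 ^ (m + 1)) 0 (Iic 0) 0 :=
      (hasDerivWithinAt_const 0 _ (0 : ℝ)).congr_of_mem
        (fun y hy => by simp [max_eq_right (mem_Iic.mp hy)]) self_mem_Iic
    have hright : HasDerivWithinAt (fun v : ℝ => max v 0 ^ (m + 1)) 0 (Ici 0) 0 := by
      have hpow : HasDerivAt (fun v : ℝ => v ^ (m + 1)) 0 0 := by
        simpa [hm] using hasDerivAt_pow (m + 1) (0 : ℝ)
      exact hpow.hasDerivWithinAt.congr_of_mem
        (fun y hy => by simp [max_eq_left (mem_Ici.mp hy)]) self_mem_Ici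
    have hboth := hleft.union hright
    rw [Iic_union_Ici, hasDerivWithinAt_univ] at hboth
    simpa [zero_pow hm] using hboth
  · have hpow : (fun v : ℝ => max v 0 ^ (m + 1)) =ᶠ[𝓝 v] fun v => v ^ (m + 1) := by
      filter_upwards [Ioi_mem_nhds hv] with y hy
      rw [max_eq_left hy.le]
    simpa [max_eq_left hv.le] using (hasDerivAt_pow (m + 1) v).congr_of_eventuallyEq hpow

lemma deriv_max_zero_pow {m : ℕ} (hm : m ≠ 0) :
    deriv (fun v : ℝ => max v 0 ^ (m + 1)) = fun v => ((m : ℝ) + 1) * max v 0 ^ m :=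
  funext fun v => (hasDerivAt_max_zero_pow hm v).deriv

lemma contDiff_max_zero_pow (k : ℕ) : ContDiff ℝ k (fun v : ℝ => max v 0 ^ (k + 1)) := by
  induction k with
  | zero => simpa using continuous_id.max continuous_const
  | succ k ih =>
    rw [Nat.cast_succ, contDiff_succ_iff_deriv, deriv_max_zero_pow k.succ_ne_zero]
    exact ⟨fun v => (hasDerivAt_max_zero_pow k.succ_ne_zero v).differentiableAt, by simp,
      contDiff_const.mul ih⟩

lemma not_differentiableAt_max_zero : ¬ DifferentiableAt ℝ (fun v : ℝ => max v 0) 0 := by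
  intro h
  have habs : (fun v : ℝ => 2 * max v 0 - v) = abs := by
    funext v
    rcases le_total 0 v with hv | hv
    · rw [max_eq_left hv, abs_of_nonneg hv]; ring
    · rw [max_eq_right hv, abs_of_nonpos hv]; ring
  exact not_differentiableAt_abs_zero (habs ▸ (h.const_mul 2).sub differentiableAt_id)

lemma not_contDiffAt_max_zero_pow (k : ℕ) :
    ¬ ContDiffAt ℝ (k + 1 : ℕ) (fun v : ℝ => max v 0 ^ (k + 1)) 0 := by
  induction k with
  | zero =>
    intro h
    exact not_differentiableAt_max_zero (by simpa using h.differentiableAt (by simp))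
  | succ k ih =>
    intro h
    have hderiv :
        ContDiffAt ℝ (k + 1 : ℕ) (fun v : ℝ => (k + 1 + 1) * max v 0 ^ (k + 1)) 0 := by
      have := h.derivWithin (m := (k + 1 : ℕ)) (by norm_cast)
      simpa only [deriv_max_zero_pow k.succ_ne_zero, Nat.succ_eq_add_one, Nat.cast_add,
        Nat.cast_one] using this
    refine ih ((hderiv.const_smul ((k : ℝ) + 1 + 1)⁻¹).congr_of_eventuallyEq
      (Eventually.of_forall fun v => ?_))
    simp [← mul_assoc, inv_mul_cancel₀ (by positivity : (k : ℝ) + 1 + 1 ≠ 0)]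

lemma not_contDiffAt_add_mul_max_zero_pow {p : ℝ → ℝ} {k : ℕ}
    (hp : ContDiffAt ℝ (k + 1 : ℕ) p 0) {c : ℝ} (hc : c ≠ 0) :
    ¬ ContDiffAt ℝ (k + 1 : ℕ) (fun v => p v + c * max v 0 ^ (k + 1)) 0 := by
  intro h
  refine not_contDiffAt_max_zero_pow k (((h.sub hp).const_smul c⁻¹).congr_of_eventuallyEq
    (Eventually.of_forall fun v => ?_))
  simp [← mul_assoc, inv_mul_cancel₀ hc]

lemma contDiffAt_log_comp_iff {E : Type*} [NormedAddCommGroup E] [NormedSpace ℝ E]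
    {f : E → ℝ} {x : E} {n : WithTop ℕ∞} (hf : ∀ᶠ y in 𝓝 x, 0 < f y) :
    ContDiffAt ℝ n (fun y => Real.log (f y)) x ↔ ContDiffAt ℝ n f x :=
  ⟨fun h => h.exp.congr_of_eventuallyEq (hf.mono fun _ hy => (Real.exp_log hy).symm),
    fun h => h.log hf.self_of_nhds.ne'⟩

/-- f(v) = P(v) + c·vⁿΘ(v) with P a polynomial, c ≠ 0, n ≥ 1, is exactly (n−1)-times
continuously differentiable at 0 and not n-times; if moreover f > 0 near 0, the same holds
for ln f. This transfers the nonanalyticity of the density of states to the entropy. -/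
theorem polynomial_plus_heaviside_power_differentiability
    (P : Polynomial ℝ) (c : ℝ) (hc : c ≠ 0) (n : ℕ) (hn : 1 ≤ n)
    (f : ℝ → ℝ)
    (hf : ∀ v : ℝ, f v = P.eval v + c * (if 0 ≤ v then v ^ n else 0)) :
    (ContDiffAt ℝ (n - 1 : ℕ) f 0 ∧ ¬ ContDiffAt ℝ (n : ℕ) f 0) ∧
    ((∀ᶠ v in nhds (0 : ℝ), 0 < f v) →
      ContDiffAt ℝ (n - 1 : ℕ) (fun v => Real.log (f v)) 0 ∧
      ¬ ContDiffAt ℝ (n : ℕ) (fun v => Real.log (f v)) 0) := by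
  obtain ⟨k, rfl⟩ : ∃ k, n = k + 1 := ⟨n - 1, by omega⟩
  have hf_max : f = fun v => P.eval v + c * max v 0 ^ (k + 1) :=
    funext fun v => by rw [hf, ite_nonneg_pow_eq_max_zero_pow k.succ_ne_zero]
  have hP (m : WithTop ℕ∞) : ContDiff ℝ m fun v => P.eval v := by
    simpa using P.contDiff_aeval (𝕜 := ℝ) m
  have hreg : ContDiffAt ℝ k f 0 :=
    hf_max ▸ ((hP _).add (contDiff_const.mul (contDiff_max_zero_pow k))).contDiffAt
  have hsing : ¬ ContDiffAt ℝ (k + 1 : ℕ) f 0 :=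
    hf_max ▸ not_contDiffAt_add_mul_max_zero_pow (hP _).contDiffAt hc
  rw [Nat.add_sub_cancel]
  exact ⟨⟨hreg, hsing⟩, fun hpos => by
    rw [contDiffAt_log_comp_iff hpos, contDiffAt_log_comp_iff hpos]
    exact ⟨hreg, hsing⟩⟩
end
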